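/- arXiv:1810.10430 — 4 statements merged into one kernel-verified Lean document; each statement's English description precedes it below -/
import Mathlib

section
/- Let G be a finite graph on p ≥ 3 vertices with κ(G) ≥ α(G). Then G is connected and the diameter of G does not exceed ⌊√(2p−3)⌋. -/
/-!
Independence of distant vertices and the separating spheres play against each other. If
`d = dist x y`, the vertices at even positions of a shortest `x`–`y` path form an independent set
of size `⌊d/2⌋ + 1`, so `κ ≥ α ≥ ⌊d/2⌋ + 1`. Each sphere `{v | dist x v = i}` with `0 < i < d`
separates `x` from `y`, so it has at least `κ` vertices; together with `x` and `y` this gives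
`p ≥ 2 + (d - 1)(⌊d/2⌋ + 1) ≥ (d² + 3)/2`.
-/

open SimpleGraph Finset

/-- `Mball G r u` is the set of vertices at distance at most `r` from `u`
(the vertex set of the ball `G_r(u)`; the ball itself is `G.induce (Mball G r u)`). -/
def Mball {V : Type*} (G : SimpleGraph V) (r : ℕ) (u : V) : Set V := {v | G.edist u v ≤ r}

/-- `Nsphere G r u` is the set of vertices at distance exactly `r` from `u`. -/
def Nsphere {V : Type*} (G : SimpleGraph V) (r : ℕ) (u : V) : Set V := {v | G.edist u v = r}

/-- The degree of a vertex, as the cardinality of its neighborhood. -/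
noncomputable def deg {V : Type*} (G : SimpleGraph V) (u : V) : ℕ := (G.neighborSet u).ncard

/-- The (vertex) connectivity of a graph: the smallest number of vertices whose removal
turns it into a disconnected or trivial (one-vertex) graph. -/
noncomputable def kappa {V : Type*} (G : SimpleGraph V) : ℕ :=
  sInf {n | ∃ s : Set V, s.Finite ∧ s.ncard = n ∧
    (¬ (G.induce sᶜ).Connected ∨ sᶜ.ncard = 1)}

/-- The independence number of a graph: the maximum size of a set of
pairwise nonadjacent vertices. -/
noncomputable def alpha {V : Type*} (G : SimpleGraph V) : ℕ :=
  sSup {n | ∃ s : Set V, s.Finite ∧ s.ncard = n ∧ s.Pairwise (fun a b => ¬ G.Adj a b)}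

namespace SimpleGraph

variable {V : Type*} {G : SimpleGraph V}

lemma Walk.dist_getVert_of_length_eq_dist {u v : V} {p : G.Walk u v}
    (hp : p.length = G.dist u v) {n : ℕ} (hn : n ≤ p.length) :
    G.dist u (p.getVert n) = n := by
  have := length_eq_dist_of_subwalk hp (p.isSubwalk_take n)
  rwa [Walk.take_length, min_eq_left hn, eq_comm] at this

lemma Walk.exists_mem_support_dist_eq (x : V) {a b : V} (w : G.Walk a b) {i : ℕ}
    (ha : G.dist x a ≤ i) (hb : i ≤ G.dist x b) : ∃ v ∈ w.support, G.dist x v = i := by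
  induction w with
  | nil => exact ⟨_, List.mem_singleton_self _, le_antisymm ha hb⟩
  | @cons a c b hac w ih =>
    by_cases hc : G.dist x c ≤ i
    · obtain ⟨v, hv, hvi⟩ := ih hc hb
      exact ⟨v, List.mem_cons_of_mem a hv, hvi⟩
    · have := hac.diff_dist_adj (u := x)
      exact ⟨a, List.mem_cons_self, by omega⟩

lemma not_adj_of_dist_add_two_le {x u v : V} (h : G.dist x u + 2 ≤ G.dist x v) :
    ¬ G.Adj u v := fun huv => by
  have := huv.diff_dist_adj (u := x)
  omega

lemma not_connected_induce_compl_dist_eq (x y : V) {i : ℕ} (hi : 0 < i)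
    (hiy : i < G.dist x y) : ¬ (G.induce {v | G.dist x v = i}ᶜ).Connected := by
  intro hconn
  have hx : x ∈ {v | G.dist x v = i}ᶜ := by simp [hi.ne]
  have hy : y ∈ {v | G.dist x v = i}ᶜ := by simp [hiy.ne']
  obtain ⟨w⟩ := hconn.preconnected ⟨x, hx⟩ ⟨y, hy⟩
  obtain ⟨v, hv, hvi⟩ :=
    (w.map (Embedding.induce _).toHom).exists_mem_support_dist_eq x (by simp) hiy.le
  rw [Walk.support_map, List.mem_map] at hv
  obtain ⟨u, -, rfl⟩ := hv
  exact u.2 hvi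

lemma kappa_le_ncard {s : Set V} (hs : s.Finite) (hsep : ¬ (G.induce sᶜ).Connected) :
    kappa G ≤ s.ncard :=
  Nat.sInf_le ⟨s, hs, rfl, Or.inl hsep⟩

lemma kappa_eq_zero_of_not_connected (hG : ¬ G.Connected) : kappa G = 0 := by
  have hsep : ¬ (G.induce (∅ : Set V)ᶜ).Connected := by
    rwa [Set.compl_empty, (induceUnivIso G).connected_iff]
  simpa using kappa_le_ncard Set.finite_empty hsep

lemma ncard_le_alpha [Finite V] {s : Set V} (hs : G.IsIndepSet s) : s.ncard ≤ alpha G := by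
  refine le_csSup ⟨Nat.card V, ?_⟩ ⟨s, s.toFinite, rfl, hs⟩
  rintro n ⟨t, -, rfl, -⟩
  exact Set.ncard_le_card t

lemma connected_of_alpha_le_kappa [Finite V] [Nonempty V] (h : alpha G ≤ kappa G) :
    G.Connected := by
  by_contra hG
  obtain ⟨v⟩ := ‹Nonempty V›
  have hα : 1 ≤ alpha G := by
    simpa using ncard_le_alpha (G := G) (Set.pairwise_singleton v _)
  rw [kappa_eq_zero_of_not_connected hG] at h
  omega

lemma Reachable.dist_div_two_add_one_le_alpha [Finite V] {x y : V} (hxy : G.Reachable x y) :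
    G.dist x y / 2 + 1 ≤ alpha G := by
  classical
  obtain ⟨w, hw⟩ := hxy.exists_walk_length_eq_dist
  set d := G.dist x y
  let f : ℕ → V := fun k => w.getVert (2 * k)
  have hf : ∀ k ∈ range (d / 2 + 1), G.dist x (f k) = 2 * k := fun k hk =>
    Walk.dist_getVert_of_length_eq_dist hw (by rw [mem_range] at hk; omega)
  have hinj : Set.InjOn f (range (d / 2 + 1)) := fun k hk l hl hkl => by
    have := (hf k hk).symm.trans (hkl ▸ hf l hl)
    omega
  have hindep : G.IsIndepSet ((range (d / 2 + 1)).image f : Set V) := by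
    simp only [coe_image]
    rintro _ ⟨k, hk, rfl⟩ _ ⟨l, hl, rfl⟩ hkl
    rcases lt_trichotomy k l with hlt | rfl | hgt
    · exact not_adj_of_dist_add_two_le (by rw [hf k hk, hf l hl]; omega)
    · exact absurd rfl hkl
    · exact fun hadj => not_adj_of_dist_add_two_le (by rw [hf k hk, hf l hl]; omega) hadj.symm
  have := ncard_le_alpha hindep
  rwa [Set.ncard_coe_finset, card_image_of_injOn hinj, card_range] at this

lemma two_add_mul_kappa_le_card [Fintype V] {x y : V} (hxy : x ≠ y) :
    2 + (G.dist x y - 1) * kappa G ≤ Fintype.card V := by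
  classical
  set d := G.dist x y
  have hsphere : ∀ i ∈ Ioo 0 d, kappa G ≤ #{v | G.dist x v = i} := fun i hi => by
    rw [mem_Ioo] at hi
    have := kappa_le_ncard (Set.toFinite _) (not_connected_induce_compl_dist_eq x y hi.1 hi.2)
    rwa [Set.ncard_eq_toFinset_card', Set.toFinset_ofPred] at this
  have hdisj : Disjoint ({x, y} : Finset V) ({v | G.dist x v ∈ Ioo 0 d} : Finset V) := by
    simp [d]
  calc 2 + (d - 1) * kappa G = #{x, y} + ∑ _i ∈ Ioo 0 d, kappa G := by
        simp [card_pair hxy, mul_comm]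
    _ ≤ #{x, y} + ∑ i ∈ Ioo 0 d, #{v | G.dist x v = i} := by
        gcongr with i hi
        exact hsphere i hi
    _ = #({x, y} ∪ ({v | G.dist x v ∈ Ioo 0 d} : Finset V)) := by
        rw [card_union_of_disjoint hdisj, sum_card_fiberwise_eq_card_filter]
    _ ≤ Fintype.card V := card_le_univ _

end SimpleGraph

lemma Nat.mul_self_add_three_le_of_two_add_mul_half_le {d p : ℕ}
    (h : 2 + (d - 1) * (d / 2 + 1) ≤ p) : d * d + 3 ≤ 2 * p := by
  rcases d with _ | e
  · omega
  · have hq : e ≤ 2 * ((e + 1) / 2) := by omega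
    have := Nat.mul_le_mul_left e hq
    simp only [Nat.add_sub_cancel] at h
    nlinarith

/-- A finite graph on `p ≥ 3` vertices with `κ(G) ≥ α(G)` is connected
and has diameter at most `⌊√(2p−3)⌋`. -/
theorem stmt_1 {V : Type*} [Fintype V] (G : SimpleGraph V) (p : ℕ)
    (hcard : Fintype.card V = p) (hp : 3 ≤ p)
    (h : alpha G ≤ kappa G) :
    G.Connected ∧ ∀ x y : V, G.dist x y ≤ Nat.sqrt (2 * p - 3) := by
  have : Nonempty V := Fintype.card_pos_iff.mp (by omega)
  have hconn := connected_of_alpha_le_kappa h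
  refine ⟨hconn, fun x y => Nat.le_sqrt.mpr ?_⟩
  rcases eq_or_ne x y with rfl | hxy
  · simp
  have hbound : 2 + (G.dist x y - 1) * (G.dist x y / 2 + 1) ≤ p := calc
    _ ≤ 2 + (G.dist x y - 1) * kappa G := by
      gcongr
      exact ((hconn x y).dist_div_two_add_one_le_alpha).trans h
    _ ≤ p := hcard ▸ two_add_mul_kappa_le_card hxy
  have := Nat.mul_self_add_three_le_of_two_add_mul_half_le hbound
  omega
end

section
/- Let G be a connected finite balanced bipartite graph on at least four vertices such that d(u) + d(v) > 1 + |N_2(u) ∪ N(v)| for every pair of vertices u, v ∈ V(G) with d(u,v) = 3. Then for every path P in G there exists a cycle in G whose length is at least the length of P; that is, the length of any path of G does not exceed the length of a longest cycle of G. -/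
open SimpleGraph

/-!
Fix a longest path `Q = z ⋯ t`. All neighbours of `z` lie on `Q`, and for a neighbour `Q[m]`
of `z` the Pósa rotation `Q[m-1] ⋯ z Q[m] ⋯ t` is again a longest path with the same vertices
and the same end `t`. If `w` is at distance 3 from `z`, the predecessors `Q[m-1]` of the `d(z) - 1`
neighbours `Q[m]` with `m ≥ 2` all lie in `N_2(z)`, so the degree condition forces one of them to
be adjacent to `w`. Rotating to that predecessor and then once more around `w` (which lies on the
rotated path) produces a start adjacent to `w`, two steps closer to any target beyond `w`.
Iterating, the start can be rotated next to any vertex `y` of the colour opposite to `z`.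

If `Q` had even length, balance would give a vertex of the opposite colour off `Q`; rotating
the start next to it contradicts maximality. So `Q` has odd length, its ends have opposite colours,
and rotating the start next to `t` closes a cycle of length `|Q| + 1`.
-/

namespace SimpleGraph

variable {V : Type*} {G : SimpleGraph V}

lemma Coloring.eq_of_adj_of_adj (c : G.Coloring Bool) {x y z : V} (hxy : G.Adj x y)
    (hyz : G.Adj y z) : c x = c z := by
  have h₁ := c.valid hxy
  have h₂ := c.valid hyz
  revert h₁ h₂
  cases c x <;> cases c y <;> cases c z <;> decide

lemma Coloring.ne_iff_odd_length (c : G.Coloring Bool) {u v : V} (p : G.Walk u v) :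
    c u ≠ c v ↔ Odd p.length := by
  rw [c.odd_length_iff_not_congr p]
  cases c u <;> cases c v <;> decide

lemma Coloring.eq_of_length_eq (c : G.Coloring Bool) {u v w : V} (p : G.Walk u w)
    (q : G.Walk v w) (h : p.length = q.length) : c u = c v := by
  have hp := c.even_length_iff_congr p
  have hq := c.even_length_iff_congr q
  rw [h, hq] at hp
  exact Bool.eq_iff_iff.mpr (by tauto)

lemma Coloring.edist_eq_two_of_adj_of_adj (c : G.Coloring Bool) {x y z : V} (hxy : G.Adj x y)
    (hyz : G.Adj y z) (hxz : x ≠ z) : G.edist x z = 2 :=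
  edist_eq_two_iff.mpr ⟨hxz, fun h => c.valid h (c.eq_of_adj_of_adj hxy hyz),
    ⟨y, hxy, hyz.symm⟩⟩

lemma Reachable.exists_dist_eq_of_le {u v : V} (hr : G.Reachable u v) {k : ℕ}
    (hk : k ≤ G.dist u v) : ∃ w, G.dist u w = k ∧ G.dist w v = G.dist u v - k := by
  obtain ⟨W, hW⟩ := hr.exists_walk_length_eq_dist
  have h₁ : G.dist u (W.getVert k) ≤ k := by
    simpa [Walk.take_length, hW, hk] using dist_le (W.take k)
  have h₂ : G.dist (W.getVert k) v ≤ G.dist u v - k := by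
    simpa [Walk.drop_length, hW] using dist_le (W.drop k)
  have h₃ := (W.drop k).reachable.dist_triangle_right u
  exact ⟨W.getVert k, by omega, by omega⟩

namespace Walk

lemma adj_getVert_pred {u v : V} (p : G.Walk u v) {m : ℕ} (hm : 0 < m) (hmp : m ≤ p.length) :
    G.Adj (p.getVert (m - 1)) (p.getVert m) := by
  simpa [Nat.sub_add_cancel hm] using p.adj_getVert_succ (i := m - 1) (by omega)

lemma length_eq_of_support_perm {u v u' v' : V} {p : G.Walk u v} {q : G.Walk u' v'}
    (h : p.support.Perm q.support) : p.length = q.length := by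
  simpa using h.length_eq

lemma IsPath.isCycle_cons {u v : V} {p : G.Walk u v} (hp : p.IsPath) (hlen : 2 ≤ p.length)
    (h : G.Adj v u) : (cons h p).IsCycle :=
  isCycle_iff_isPath_tail_and_le_length.mpr ⟨by simpa using hp, by simp; omega⟩

lemma countP_support_color (c : G.Coloring Bool) {u v : V} (p : G.Walk u v) :
    p.support.countP (fun x => c x = c u) = p.length / 2 + 1 ∧
      p.support.countP (fun x => c x ≠ c u) = (p.length + 1) / 2 := by
  induction p with
  | nil => simp
  | @cons u v w h p ih =>
    have hflip : ∀ x, (c x = c u ↔ c x ≠ c v) := by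
      have := c.valid h
      intro x
      revert this
      cases c x <;> cases c u <;> cases c v <;> decide
    have h₁ : p.support.countP (fun x => c x = c u) = p.support.countP (fun x => c x ≠ c v) :=
      List.countP_congr (by simpa using fun x _ => hflip x)
    have h₂ : p.support.countP (fun x => c x ≠ c u) = p.support.countP (fun x => c x = c v) :=
      List.countP_congr (by simpa using fun x _ => (not_congr (hflip x)).trans not_not)
    simp only [support_cons, List.countP_cons, h₁, h₂, ih, length_cons, ne_eq, not_true,
      decide_true, decide_false, Bool.false_eq_true, ↓reduceIte, true_and]
    omega

lemma IsPath.exists_color_ne_notMem_support [Finite V] (c : G.Coloring Bool)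
    (hbal : {x | c x = true}.ncard = {x | c x = false}.ncard) {a b : V} {P : G.Walk a b}
    (hP : P.IsPath) (heven : Even P.length) : ∃ x, c x ≠ c a ∧ x ∉ P.support := by
  classical
  by_contra! hall
  obtain ⟨hsame, hopp⟩ := P.countP_support_color c
  have hsame_le : P.support.countP (fun x => c x = c a) ≤ {x | c x = c a}.ncard := by
    rw [List.countP_eq_length_filter, ← List.toFinset_card_of_nodup (hP.support_nodup.filter _),
      ← Set.ncard_coe_finset]
    exact Set.ncard_le_ncard (fun x => by simp) (Set.toFinite _)
  have hopp_eq : {x | c x ≠ c a}.ncard = P.support.countP (fun x => c x ≠ c a) := by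
    rw [List.countP_eq_length_filter, ← List.toFinset_card_of_nodup (hP.support_nodup.filter _),
      ← Set.ncard_coe_finset]
    congr 1
    ext x
    simpa using fun h => hall x h
  have hbal' : {x | c x = c a}.ncard = {x | c x ≠ c a}.ncard := by
    cases c a <;> simp [hbal]
  obtain ⟨r, hr⟩ := heven
  omega

/-- Pósa rotation of `Q = z ⋯ Q[m-1] Q[m] ⋯ t` along the edge `z Q[m]`:
the walk `Q[m-1] ⋯ z Q[m] ⋯ t`. -/
def posaRotation {z t : V} (Q : G.Walk z t) (m : ℕ) (h : G.Adj z (Q.getVert m)) :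
    G.Walk (Q.getVert (m - 1)) t :=
  (Q.take (m - 1)).reverse.append (cons h (Q.drop m))

lemma support_posaRotation_perm {z t : V} (Q : G.Walk z t) {m : ℕ} (hm : 0 < m)
    (hmQ : m ≤ Q.length) (h : G.Adj z (Q.getVert m)) :
    (Q.posaRotation m h).support.Perm Q.support := by
  rw [posaRotation, support_append, support_reverse, support_cons, List.tail_cons,
    support_take, drop_support_eq_support_drop_min, Nat.sub_add_cancel hm, min_eq_left hmQ]
  exact ((List.reverse_perm _).append_right _).trans (.of_eq (List.take_append_drop m _))

lemma exists_perm_adj_of_mem_support {z t v : V} (Q : G.Walk z t) (hv : v ∈ Q.support)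
    (h : G.Adj z v) : ∃ (u : V) (Q' : G.Walk u t), Q'.support.Perm Q.support ∧ G.Adj u v := by
  obtain ⟨m, rfl, hmQ⟩ := mem_support_iff_exists_getVert.mp hv
  have hm : 0 < m := Nat.pos_of_ne_zero (by rintro rfl; exact h.ne Q.getVert_zero.symm)
  exact ⟨_, Q.posaRotation m h, Q.support_posaRotation_perm hm hmQ h,
    Q.adj_getVert_pred hm hmQ⟩

def IsLongestPath {u v : V} (Q : G.Walk u v) : Prop :=
  Q.IsPath ∧ ∀ (a b : V) (R : G.Walk a b), R.IsPath → R.length ≤ Q.length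

variable {z t : V} {Q : G.Walk z t}

lemma IsLongestPath.of_perm (hQ : Q.IsLongestPath) {z' : V} {Q' : G.Walk z' t}
    (h : Q'.support.Perm Q.support) : Q'.IsLongestPath :=
  ⟨IsPath.mk' (h.nodup_iff.mpr hQ.1.support_nodup), length_eq_of_support_perm h ▸ hQ.2⟩

lemma IsLongestPath.mem_support_of_adj (hQ : Q.IsLongestPath) {x : V} (h : G.Adj z x) :
    x ∈ Q.support := by
  by_contra hx
  have := hQ.2 _ _ _ ((cons_isPath_iff h.symm Q).mpr ⟨hQ.1, hx⟩)
  simp at this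

lemma IsLongestPath.exists_getVert_eq_of_adj (hQ : Q.IsLongestPath) {x : V} (h : G.Adj z x)
    (hx : x ≠ Q.getVert 1) : ∃ m, 2 ≤ m ∧ m ≤ Q.length ∧ Q.getVert m = x := by
  obtain ⟨m, rfl, hmQ⟩ := mem_support_iff_exists_getVert.mp (hQ.mem_support_of_adj h)
  have hm0 : m ≠ 0 := by rintro rfl; exact h.ne Q.getVert_zero.symm
  have hm1 : m ≠ 1 := by rintro rfl; exact hx rfl
  exact ⟨m, by omega, hmQ, rfl⟩

lemma IsLongestPath.two_le_length [Fintype V] (hconn : G.Connected)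
    (hV : 3 ≤ Fintype.card V) (hQ : Q.IsLongestPath) : 2 ≤ Q.length := by
  by_contra! hlt
  have hadj : ∀ u v, u ≠ v → G.Adj u v := fun u v huv => by
    obtain ⟨R, hR, hRlen⟩ := hconn.exists_path_of_dist u v
    have := hQ.2 _ _ R hR
    have := hconn.pos_dist_of_ne huv
    exact dist_eq_one_iff_adj.mp (by omega)
  obtain ⟨x, y, w, hxy, hxw, hyw⟩ := Fintype.two_lt_card_iff.mp hV
  have := hQ.2 _ _ (cons (hadj x y hxy) (cons (hadj y w hyw) nil)) (by simp [hxy, hxw, hyw])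
  simp at this
  omega

lemma IsLongestPath.exists_adj_getVert_of_deg [Finite V] (c : G.Coloring Bool)
    (hQ : Q.IsLongestPath) {w : V}
    (hzw : 1 + (Nsphere G 2 z ∪ G.neighborSet w).ncard < deg G z + deg G w) :
    ∃ m, 2 ≤ m ∧ m ≤ Q.length ∧ G.Adj z (Q.getVert m) ∧
      G.Adj w (Q.getVert (m - 1)) := by
  classical
  by_contra! hnone
  have hinj := hQ.1.getVert_injOn
  set I := (Finset.Icc 2 Q.length).filter (fun m => G.Adj z (Q.getVert m))
  have hI : ∀ m ∈ I, 2 ≤ m ∧ m ≤ Q.length ∧ G.Adj z (Q.getVert m) := by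
    intro m hm
    simp only [I, Finset.mem_filter, Finset.mem_Icc] at hm
    exact ⟨hm.1.1, hm.1.2, hm.2⟩
  have hdeg_z : deg G z ≤ I.card + 1 := by
    have hsub : G.neighborSet z ⊆ insert (Q.getVert 1) ↑(I.image Q.getVert) := fun x hx => by
      by_cases hx1 : x = Q.getVert 1
      · exact Or.inl hx1
      obtain ⟨m, hm2, hmQ, rfl⟩ := hQ.exists_getVert_eq_of_adj hx hx1
      refine Or.inr (Finset.mem_image_of_mem _ ?_)
      simpa [I] using ⟨⟨hm2, hmQ⟩, hx⟩
    calc deg G z ≤ (insert (Q.getVert 1) (↑(I.image Q.getVert) : Set V)).ncard :=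
          Set.ncard_le_ncard hsub (Set.toFinite _)
      _ ≤ (I.image Q.getVert).card + 1 := by
          rw [← Set.ncard_coe_finset]; exact Set.ncard_insert_le _ _
      _ ≤ I.card + 1 := by gcongr; exact Finset.card_image_le
  set B := I.image (fun m => Q.getVert (m - 1))
  have hB : B.card = I.card := by
    refine Finset.card_image_of_injOn fun m hm n hn h => ?_
    obtain ⟨hm2, hmQ, -⟩ := hI m hm
    obtain ⟨hn2, hnQ, -⟩ := hI n hn
    have := hinj (show m - 1 ≤ Q.length by omega) (show n - 1 ≤ Q.length by omega) h
    omega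
  have hBsphere : ↑B ⊆ Nsphere G 2 z := by
    intro x hx
    obtain ⟨m, hm, rfl⟩ := Finset.mem_image.mp hx
    obtain ⟨hm2, hmQ, hzm⟩ := hI m hm
    have hne : z ≠ Q.getVert (m - 1) := fun h => by
      have := hinj (show 0 ≤ Q.length by omega) (show m - 1 ≤ Q.length by omega)
        (Q.getVert_zero.trans h)
      omega
    exact c.edist_eq_two_of_adj_of_adj hzm (Q.adj_getVert_pred (by omega) hmQ).symm hne
  have hBw : Disjoint (↑B : Set V) (G.neighborSet w) := by
    refine Set.disjoint_left.mpr fun x hx hxw => ?_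
    obtain ⟨m, hm, rfl⟩ := Finset.mem_image.mp hx
    obtain ⟨hm2, hmQ, hzm⟩ := hI m hm
    exact hnone m hm2 hmQ hzm hxw
  have hcount := Set.ncard_le_ncard (Set.union_subset_union_left (G.neighborSet w) hBsphere)
    (Set.toFinite _)
  rw [Set.ncard_union_eq hBw (Set.toFinite _) (Set.toFinite _), Set.ncard_coe_finset, hB] at hcount
  unfold deg at hzw hdeg_z
  omega

lemma IsLongestPath.exists_perm_adj_of_deg [Finite V] (c : G.Coloring Bool)
    (hQ : Q.IsLongestPath) {w : V}
    (hzw : 1 + (Nsphere G 2 z ∪ G.neighborSet w).ncard < deg G z + deg G w) :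
    ∃ (z' : V) (Q' : G.Walk z' t), Q'.support.Perm Q.support ∧ G.Adj z' w := by
  obtain ⟨m, hm2, hmQ, hzm, hwm⟩ := hQ.exists_adj_getVert_of_deg c hzw
  have hperm₁ := Q.support_posaRotation_perm (by omega) hmQ hzm
  have hw₁ := (hQ.of_perm hperm₁).mem_support_of_adj hwm.symm
  obtain ⟨z', Q', hperm, hadj⟩ :=
    (Q.posaRotation m hzm).exists_perm_adj_of_mem_support hw₁ hwm.symm
  exact ⟨z', Q', hperm.trans hperm₁, hadj⟩

lemma IsLongestPath.exists_perm_adj [Finite V] (hconn : G.Connected) (c : G.Coloring Bool)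
    (hdeg : ∀ u v : V, G.edist u v = 3 →
      1 + (Nsphere G 2 u ∪ G.neighborSet v).ncard < deg G u + deg G v)
    (hQ : Q.IsLongestPath) {y : V} (hy : c z ≠ c y) :
    ∃ (z' : V) (Q' : G.Walk z' t), Q'.support.Perm Q.support ∧ G.Adj z' y := by
  induction hn : G.dist z y using Nat.strong_induction_on generalizing z with
  | _ n ih =>
    obtain ⟨W, hW⟩ := hconn.exists_walk_length_eq_dist z y
    obtain ⟨k, rfl⟩ : Odd n := hn ▸ hW ▸ (c.ne_iff_odd_length W).mp hy
    rcases k with _ | k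
    · exact ⟨z, Q, .refl _, dist_eq_one_iff_adj.mp hn⟩
    obtain ⟨w, hzw, hwy⟩ := (hconn z y).exists_dist_eq_of_le (k := 3) (by omega)
    have hzw' : G.edist z w = 3 := by rw [← (hconn z w).coe_dist_eq_edist, hzw]; rfl
    obtain ⟨z₁, Q₁, hperm, hadj⟩ := hQ.exists_perm_adj_of_deg c (hdeg z w hzw')
    have hc : c z₁ = c z := c.eq_of_length_eq Q₁ Q (length_eq_of_support_perm hperm)
    have hlt : G.dist z₁ y < 2 * (k + 1) + 1 := by
      have := (hconn w y).dist_triangle_right z₁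
      have := dist_eq_one_iff_adj.mpr hadj
      omega
    obtain ⟨z₂, Q₂, hperm₂, hadj₂⟩ := ih _ hlt (hQ.of_perm hperm) (hc ▸ hy) rfl
    exact ⟨z₂, Q₂, hperm₂.trans hperm, hadj₂⟩

lemma IsLongestPath.odd_length [Finite V] (hconn : G.Connected) (c : G.Coloring Bool)
    (hbal : {x | c x = true}.ncard = {x | c x = false}.ncard)
    (hdeg : ∀ u v : V, G.edist u v = 3 →
      1 + (Nsphere G 2 u ∪ G.neighborSet v).ncard < deg G u + deg G v)
    (hQ : Q.IsLongestPath) : Odd Q.length := by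
  by_contra heven
  obtain ⟨v, hv, hvQ⟩ :=
    hQ.1.exists_color_ne_notMem_support c hbal (Nat.not_odd_iff_even.mp heven)
  obtain ⟨z', Q', hperm, hadj⟩ := hQ.exists_perm_adj hconn c hdeg hv.symm
  exact hvQ (hperm.subset ((hQ.of_perm hperm).mem_support_of_adj hadj))

end Walk

open Walk in
lemma exists_isLongestPath [Fintype V] [Nonempty V] (G : SimpleGraph V) :
    ∃ (a b : V) (Q : G.Walk a b), Q.IsLongestPath := by
  let L : Set ℕ := {n | ∃ (a b : V) (R : G.Walk a b), R.IsPath ∧ R.length = n}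
  have hne : L.Nonempty := ⟨0, Classical.arbitrary V, _, .nil, .nil, rfl⟩
  have hbdd : BddAbove L :=
    ⟨Fintype.card V, by rintro _ ⟨a, b, R, hR, rfl⟩; exact hR.length_lt.le⟩
  obtain ⟨a, b, Q, hQ, hlen⟩ := Nat.sSup_mem hne hbdd
  exact ⟨a, b, Q, hQ, fun x y R hR => hlen ▸ le_csSup hbdd ⟨x, y, R, hR, rfl⟩⟩

end SimpleGraph

/-- Let `G` be a connected finite balanced bipartite graph on at least four
vertices such that `d(u) + d(v) > 1 + |N_2(u) ∪ N(v)|` for every pair of vertices `u, v` with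
`d(u,v) = 3`. Then the length of any path of `G` does not exceed the length of some cycle. -/
theorem stmt_12 {V : Type*} [Fintype V] (G : SimpleGraph V)
    (h4 : 4 ≤ Fintype.card V) (hconn : G.Connected)
    (hbip : ∃ s : Set V, (∀ ⦃x y : V⦄, G.Adj x y → (x ∈ s ↔ y ∉ s)) ∧ s.ncard = sᶜ.ncard)
    (hdeg : ∀ u v : V, G.edist u v = 3 →
      1 + (Nsphere G 2 u ∪ G.neighborSet v).ncard < deg G u + deg G v) :
    ∀ (a b : V) (P : G.Walk a b), P.IsPath →
      ∃ (c : V) (C : G.Walk c c), C.IsCycle ∧ P.length ≤ C.length := by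
  classical
  intro a b P hP
  obtain ⟨s, hs, hbal⟩ := hbip
  let c : G.Coloring Bool := Coloring.mk (fun x => decide (x ∈ s)) fun h => by simp [hs h]
  have hbal' : {x | c x = true}.ncard = {x | c x = false}.ncard := by
    change {x | decide (x ∈ s) = true}.ncard = {x | decide (x ∈ s) = false}.ncard
    simpa [← Set.compl_ofPred] using hbal
  have : Nonempty V := ⟨a⟩
  obtain ⟨x, y, Q, hQ⟩ := G.exists_isLongestPath
  have hends : c x ≠ c y := (c.ne_iff_odd_length Q).mpr (hQ.odd_length hconn c hbal' hdeg)
  obtain ⟨z, Q', hperm, hadj⟩ := hQ.exists_perm_adj hconn c hdeg hends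
  have hlen := Walk.length_eq_of_support_perm hperm
  have hC := (hQ.of_perm hperm).1.isCycle_cons
    (hlen ▸ hQ.two_le_length hconn (by omega)) hadj.symm
  exact ⟨y, _, hC, by simpa [hlen] using (hQ.2 _ _ P hP).trans (Nat.le_succ _)⟩
end

section
/- Let G be a connected finite balanced bipartite graph on at least four vertices such that d(u) + d(v) > 1 + |N_2(u) ∪ N(v)| for every pair of vertices u, v ∈ V(G) with d(u,v) = 3. Then the diameter of G does not exceed 6. -/
open SimpleGraph

/-!
Suppose `d(x, y) ≥ 7` and let `x = w₀, w₁, …, w₇` start a geodesic from `x` to `y`. As `G` is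
triangle-free, `N(w₄) \ {w₃} ⊆ N₂(w₃)`, and this set misses `N(x)` because `d(x, w₄) = 4`; so the
degree condition at the pair `(w₃, x)` forces `d(w₄) < d(w₃)`. Running the same argument backwards
from `w₇`, the pair `(w₄, w₇)` forces `d(w₃) < d(w₄)`.
-/

namespace SimpleGraph

variable {V : Type*} {G : SimpleGraph V}

lemma cliqueFree_three_of_bipartition {s : Set V}
    (hs : ∀ ⦃x y : V⦄, G.Adj x y → (x ∈ s ↔ y ∉ s)) : G.CliqueFree 3 := by
  classical
  rintro t ht
  obtain ⟨a, b, c, hab, hac, hbc, -⟩ := is3Clique_iff.mp ht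
  have := hs hab; have := hs hac; have := hs hbc
  tauto

lemma edist_le_two_of_adj_of_adj {u v w : V} (huv : G.Adj u v) (hvw : G.Adj v w) :
    G.edist u w ≤ 2 :=
  calc G.edist u w ≤ G.edist u v + G.edist v w := G.edist_triangle
    _ = 2 := by rw [edist_eq_one_iff_adj.mpr huv, edist_eq_one_iff_adj.mpr hvw]; rfl

lemma Walk.edist_getVert_le {u v : V} (p : G.Walk u v) {i j : ℕ} (hij : i ≤ j) :
    G.edist (p.getVert i) (p.getVert j) ≤ (j - i : ℕ) := by
  obtain ⟨k, rfl⟩ := Nat.exists_eq_add_of_le hij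
  calc G.edist (p.getVert i) (p.getVert (i + k))
      ≤ (((p.drop i).take k).copy rfl (p.drop_getVert i k)).length := edist_le _
    _ ≤ (i + k - i : ℕ) := by simp

lemma Walk.edist_getVert_eq_of_length_eq_edist {u v : V} (p : G.Walk u v)
    (hp : (p.length : ℕ∞) = G.edist u v) {i j : ℕ} (hij : i ≤ j) (hj : j ≤ p.length) :
    G.edist (p.getVert i) (p.getVert j) = (j - i : ℕ) := by
  have hfirst := p.edist_getVert_le (Nat.zero_le i)
  have hmid := p.edist_getVert_le hij
  have hlast := p.edist_getVert_le hj
  rw [getVert_zero] at hfirst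
  rw [getVert_length] at hlast
  have htri : G.edist u v ≤
      G.edist u (p.getVert i) + G.edist (p.getVert i) (p.getVert j) + G.edist (p.getVert j) v :=
    G.edist_triangle.trans (add_le_add_left G.edist_triangle _)
  obtain ⟨a, ha⟩ := ENat.ne_top_iff_exists.mp (ne_top_of_le_ne_top (ENat.natCast_ne_top _) hfirst)
  obtain ⟨b, hb⟩ := ENat.ne_top_iff_exists.mp (ne_top_of_le_ne_top (ENat.natCast_ne_top _) hmid)
  obtain ⟨c, hc⟩ := ENat.ne_top_iff_exists.mp (ne_top_of_le_ne_top (ENat.natCast_ne_top _) hlast)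
  rw [← ha] at hfirst
  rw [← hb] at hmid ⊢
  rw [← hc] at hlast
  rw [← hp, ← ha, ← hb, ← hc] at htri
  norm_cast at hfirst hmid hlast htri ⊢
  omega

end SimpleGraph

section DegreeCondition

variable {V : Type*} {G : SimpleGraph V}

lemma neighborSet_diff_subset_nsphere_two (hG : G.CliqueFree 3) {u w : V} (huw : G.Adj u w) :
    G.neighborSet w \ {u} ⊆ Nsphere G 2 u := by
  rintro z ⟨hwz, hzu⟩
  have hle : G.edist u z ≤ 2 := edist_le_two_of_adj_of_adj huw hwz
  have hgt : 1 < G.edist u z := by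
    refine lt_of_not_ge fun h ↦ ?_
    rcases edist_le_one_iff_adj_or_eq.mp h with huz | rfl
    · exact isIndepSet_neighborSet_of_triangleFree G hG w huw.symm hwz huz.ne huz
    · exact hzu rfl
  exact le_antisymm hle (Order.add_one_le_of_lt hgt)

lemma deg_add_deg_le_of_adj [Finite V] (hG : G.CliqueFree 3) {u w x : V} (huw : G.Adj u w)
    (hxw : 2 < G.edist x w) :
    deg G w + deg G x ≤ 1 + (Nsphere G 2 u ∪ G.neighborSet x).ncard := by
  have hdisj : Disjoint (G.neighborSet w \ {u}) (G.neighborSet x) :=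
    Set.disjoint_left.mpr fun _ ⟨hwz, _⟩ hxz ↦
      hxw.not_ge (edist_le_two_of_adj_of_adj hxz hwz.symm)
  have hdeg_w : deg G w = (G.neighborSet w \ {u}).ncard + 1 :=
    (Set.ncard_sdiff_singleton_add_one (s := G.neighborSet w) huw.symm).symm
  calc deg G w + deg G x = ((G.neighborSet w \ {u}) ∪ G.neighborSet x).ncard + 1 := by
        rw [Set.ncard_union_eq hdisj, hdeg_w, deg]; ring
    _ ≤ (Nsphere G 2 u ∪ G.neighborSet x).ncard + 1 := by
        gcongr
        · exact Set.toFinite _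
        · exact neighborSet_diff_subset_nsphere_two hG huw
    _ = _ := add_comm _ _

lemma deg_lt_deg_of_adj [Finite V] (hG : G.CliqueFree 3)
    (hdeg : ∀ u v : V, G.edist u v = 3 →
      1 + (Nsphere G 2 u ∪ G.neighborSet v).ncard < deg G u + deg G v)
    {u w x : V} (huw : G.Adj u w) (hux : G.edist u x = 3) (hxw : 2 < G.edist x w) :
    deg G w < deg G u := by
  have := deg_add_deg_le_of_adj hG huw hxw
  have := hdeg u x hux
  omega

end DegreeCondition

theorem stmt_13_general {V : Type*} [Fintype V] (G : SimpleGraph V)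
    (hbip : ∃ s : Set V, (∀ ⦃x y : V⦄, G.Adj x y → (x ∈ s ↔ y ∉ s)) ∧ s.ncard = sᶜ.ncard)
    (hdeg : ∀ u v : V, G.edist u v = 3 →
      1 + (Nsphere G 2 u ∪ G.neighborSet v).ncard < deg G u + deg G v) :
    ∀ x y : V, G.dist x y ≤ 6 := by
  obtain ⟨s, hs, -⟩ := hbip
  have hG := cliqueFree_three_of_bipartition hs
  intro x y
  by_contra! hfar
  obtain ⟨p, hp⟩ := exists_walk_of_dist_ne_zero (G := G) (u := x) (v := y) (by omega)
  have hgeod : ∀ i j, i ≤ j → j ≤ 7 → G.edist (p.getVert i) (p.getVert j) = (j - i : ℕ) :=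
    fun i j hij hj ↦ p.edist_getVert_eq_of_length_eq_edist
      (by rw [hp, (Reachable.of_dist_ne_zero (by omega)).coe_dist_eq_edist]) hij (by omega)
  have h34 : G.Adj (p.getVert 3) (p.getVert 4) := p.adj_getVert_succ (by omega)
  have h03 : G.edist (p.getVert 3) x = 3 := by
    simpa [SimpleGraph.edist_comm] using hgeod 0 3 (by omega) (by omega)
  have h04 : 2 < G.edist x (p.getVert 4) := by
    have h := hgeod 0 4 (by omega) (by omega)
    rw [p.getVert_zero] at h
    rw [h]; decide
  have h47 : G.edist (p.getVert 4) (p.getVert 7) = 3 := hgeod 4 7 (by omega) (by omega)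
  have h37 : 2 < G.edist (p.getVert 7) (p.getVert 3) := by
    rw [SimpleGraph.edist_comm, hgeod 3 7 (by omega) (by omega)]; decide
  exact (deg_lt_deg_of_adj hG hdeg h34 h03 h04).asymm
    (deg_lt_deg_of_adj hG hdeg h34.symm h47 h37)

/-- Let `G` be a connected finite balanced bipartite graph on at least four
vertices such that `d(u) + d(v) > 1 + |N_2(u) ∪ N(v)|` for every pair of vertices `u, v` with
`d(u,v) = 3`. Then the diameter of `G` does not exceed 6. -/
theorem stmt_13 {V : Type*} [Fintype V] (G : SimpleGraph V)
    (h4 : 4 ≤ Fintype.card V) (hconn : G.Connected)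
    (hbip : ∃ s : Set V, (∀ ⦃x y : V⦄, G.Adj x y → (x ∈ s ↔ y ∉ s)) ∧ s.ncard = sᶜ.ncard)
    (hdeg : ∀ u v : V, G.edist u v = 3 →
      1 + (Nsphere G 2 u ∪ G.neighborSet v).ncard < deg G u + deg G v) :
    ∀ x y : V, G.dist x y ≤ 6 :=
  stmt_13_general G hbip hdeg
end

section
/- Let G be a connected finite graph on at least three vertices such that d(u) + d(v) ≥ |N(u) ∪ N(v) ∪ N(x)| for every path uxv on three vertices with uv ∉ E(G). Then G is Hamiltonian. -/
/-!
Take a longest cycle `C`, listed as `l` with successor map `σ = l.formPerm`, and suppose some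
vertex is off `C`. By connectedness some `x ∉ C` has a neighbour on `C`; let `W` be the set of
these neighbours. Maximality of `C` gives, for distinct `w, z ∈ W`: `x` is not adjacent to
`σ w`, every common neighbour of `x` and `σ w` lies on `C`, and `σ w`, `σ z` are not adjacent
(otherwise the cycle could be rerouted through `x`). Now apply the hypothesis to the induced path
`σ w, w, x`: the neighbours of `w` outside `N(σ w) ∪ N(x)` include `σ w`, `x` and every `σ z` with
`z ∈ W` and `w ~ σ z`, while the common neighbours of `σ w` and `x` are `w` and the `z ∈ W` with
`z ~ σ w`. Hence each `w ∈ W` has fewer `z` with `w ~ σ z` than `z` with `z ~ σ w`; summed over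
`W`, both sides count the same pairs, a contradiction. A first cycle comes from an induced path
`u m v`, whose ends have a second common neighbour by the hypothesis.
-/

open SimpleGraph

open scoped Finset

namespace List
variable {α : Type*} {l A B : List α} {w z : α}

theorem exists_isRotated_append_singleton (hw : w ∈ l) : ∃ s, l ~r s ++ [w] := by
  obtain ⟨s, t, rfl⟩ := append_of_mem hw
  exact ⟨t ++ s, by simpa using isRotated_append (l := s ++ [w]) (l' := t)⟩

theorem exists_isRotated_append_of_ne (hw : w ∈ l) (hz : z ∈ l) (hwz : w ≠ z) :
    ∃ A B, ∃ (hA : A ≠ []) (hB : B ≠ []), l ~r A ++ B ∧ A.getLast hA = w ∧ B.getLast hB = z := by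
  obtain ⟨s, hs⟩ := exists_isRotated_append_singleton hz
  have hws : w ∈ s := by simpa [hwz] using hs.mem_iff.1 hw
  obtain ⟨P, Q, rfl⟩ := append_of_mem hws
  exact ⟨P ++ [w], Q ++ [z], by simp, by simp, by simpa using hs, by simp, by simp⟩

theorem formPerm_append_apply_getLast [DecidableEq α] (h : (A ++ B).Nodup) (hA : A ≠ [])
    (hB : B ≠ []) : formPerm (A ++ B) (A.getLast hA) = B.head hB := by
  obtain ⟨b, B, rfl⟩ := exists_cons_of_ne_nil hB
  obtain ⟨A, a, rfl⟩ := (eq_nil_or_concat A).resolve_left hA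
  rw [formPerm_eq_of_isRotated h isRotated_append]
  simp [← append_assoc]

end List

namespace Finset

theorem card_sdiff_le_card_inter_of_card_union_le {α : Type*} [DecidableEq α] {A B C : Finset α}
    (h : #(A ∪ B ∪ C) ≤ #A + #B) : #(C \ (A ∪ B)) ≤ #(A ∩ B) := by
  have := card_union_add_card_inter A B
  have := card_sdiff_add_card C (A ∪ B)
  rw [union_comm C] at this
  omega

theorem eq_empty_of_forall_card_bipartiteAbove_lt {α : Type*} {s : Finset α} {r : α → α → Prop}
    [∀ a b, Decidable (r a b)] (h : ∀ a ∈ s, #(s.bipartiteAbove r a) < #(s.bipartiteBelow r a)) :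
    s = ∅ := by
  by_contra hs
  have := sum_lt_sum_of_nonempty (nonempty_iff_ne_empty.2 hs) h
  rw [sum_card_bipartiteAbove_eq_sum_card_bipartiteBelow] at this
  exact lt_irrefl _ this

end Finset

namespace SimpleGraph
variable {V : Type*} {G : SimpleGraph V}

structure IsCycleList (G : SimpleGraph V) (l : List V) : Prop where
  three_le_length : 3 ≤ l.length
  nodup : l.Nodup
  chain : Cycle.Chain G.Adj (l : Cycle V)

namespace IsCycleList
variable {l : List V} {w x : V}

theorem of_isRotated {l' : List V} (h : G.IsCycleList l) (hr : l ~r l') : G.IsCycleList l' where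
  three_le_length := hr.perm.length_eq ▸ h.three_le_length
  nodup := hr.nodup_iff.1 h.nodup
  chain := Cycle.coe_eq_coe.2 hr ▸ h.chain

theorem length_le_card [Fintype V] (h : G.IsCycleList l) : l.length ≤ Fintype.card V :=
  h.nodup.length_le_card

theorem append {s m : List V} (h : G.IsCycleList (s ++ [w])) (hs : s ≠ [])
    (hm : (s ++ [w] ++ m).Nodup) (hpath : List.IsChain G.Adj (w :: (m ++ [s.head hs]))) :
    G.IsCycleList (s ++ [w] ++ m) := by
  obtain ⟨a, s, rfl⟩ := List.exists_cons_of_ne_nil hs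
  refine ⟨by have := h.three_le_length; simp at this ⊢; omega, hm, ?_⟩
  have hc := h.chain
  simp only [List.cons_append, Cycle.chain_coe_cons, List.append_assoc] at hc ⊢
  rw [List.isChain_cons_split] at hc ⊢
  exact ⟨hc.1, hpath⟩

theorem cons_reverse_append {A B : List V} (h : G.IsCycleList (A ++ B)) (hA : A ≠ [])
    (hB : B ≠ []) (hchord : G.Adj (A.head hA) (B.head hB)) (hxA : G.Adj x (A.getLast hA))
    (hxB : G.Adj x (B.getLast hB)) (hx : x ∉ A ++ B) :
    G.IsCycleList (x :: (A.reverse ++ B)) := by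
  refine ⟨by have := h.three_le_length; simp at this ⊢; omega, ?_, ?_⟩
  · have hp : (A.reverse ++ B).Perm (A ++ B) := (List.reverse_perm A).append_right B
    exact List.nodup_cons.2 ⟨fun hm => hx (hp.mem_iff.1 hm), hp.nodup_iff.2 h.nodup⟩
  obtain ⟨a, A, rfl⟩ := List.exists_cons_of_ne_nil hA
  obtain ⟨b, B, rfl⟩ := List.exists_cons_of_ne_nil hB
  have hc := h.chain
  simp only [List.cons_append, Cycle.chain_coe_cons, List.append_assoc] at hc ⊢
  rw [List.isChain_cons_split] at hc
  simp only [List.head_cons] at hchord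
  have hAx : List.IsChain G.Adj ((a :: A) ++ [x]) := (hc.1.prefix (by simp)).append
    (.singleton x) (by simpa [List.getLast?_eq_some_getLast] using hxA.symm)
  have hBx : List.IsChain G.Adj ((b :: B) ++ [x]) := (hc.2.prefix (by simp)).append
    (.singleton x) (by simpa [List.getLast?_eq_some_getLast] using hxB.symm)
  have hAx' : List.IsChain G.Adj ((a :: A) ++ [x]).reverse :=
    List.isChain_reverse.2 (hAx.imp fun _ _ h => h.symm)
  simpa using hAx'.append hBx (by simpa [List.getLast?_cons, List.getLast?_append] using hchord)

theorem isHamiltonian [Fintype V] [DecidableEq V] (h : G.IsCycleList l)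
    (hl : l.length = Fintype.card V) : G.IsHamiltonian := by
  intro _
  obtain ⟨a, b, t, rfl⟩ : ∃ a b t, l = a :: b :: t := by
    match l, h.three_le_length with
    | a :: b :: t, _ => exact ⟨a, b, t, rfl⟩
  have hc : List.IsChain G.Adj (a :: b :: (t ++ [a])) := h.chain
  obtain ⟨q, hq⟩ : ∃ q : G.Walk b a, q.support = b :: (t ++ [a]) :=
    ⟨(Walk.ofSupport _ (List.cons_ne_nil _ _) hc.of_cons).copy rfl (by simp),
      (Walk.support_copy _ _ _).trans (Walk.support_ofSupport _ _)⟩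
  have hqlen : q.length = t.length + 1 := by
    simpa [Walk.length_support] using congrArg List.length hq
  have hp : (b :: (t ++ [a])).Perm (a :: b :: t) := by
    simpa using List.perm_append_singleton a (b :: t)
  have := h.three_le_length
  simp only [List.length_cons] at this hl
  refine ⟨a, Walk.cons hc.rel q, ?_⟩
  rw [Walk.isHamiltonianCycle_iff_isCycle_and_length_eq,
    Walk.isCycle_iff_isPath_tail_and_le_length]
  simp only [Walk.getVert_cons_succ, Walk.tail_cons, Walk.isPath_def, Walk.support_copy, hq,
    Walk.length_cons, hqlen]
  exact ⟨⟨hp.nodup_iff.2 h.nodup, by omega⟩, by omega⟩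

variable [DecidableEq V]

theorem exists_isRotated_formPerm (h : G.IsCycleList l) (hw : w ∈ l) :
    ∃ s, ∃ hs : s ≠ [], l ~r s ++ [w] ∧ l.formPerm w = s.head hs := by
  obtain ⟨s, hr⟩ := List.exists_isRotated_append_singleton hw
  have hs : s ≠ [] := by
    rintro rfl
    have := hr.perm.length_eq ▸ h.three_le_length
    simp at this
  have hr' := hr.trans List.isRotated_append
  refine ⟨s, hs, hr, ?_⟩
  rw [List.formPerm_eq_of_isRotated h.nodup hr']
  exact List.formPerm_append_apply_getLast (hr'.nodup_iff.1 h.nodup) (List.cons_ne_nil _ _) hs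

theorem adj_formPerm (h : G.IsCycleList l) (hw : w ∈ l) : G.Adj w (l.formPerm w) := by
  obtain ⟨s, hs, hr, hσ⟩ := h.exists_isRotated_formPerm hw
  obtain ⟨a, s, rfl⟩ := List.exists_cons_of_ne_nil hs
  have := (h.of_isRotated hr).chain
  simp_all

end IsCycleList

structure IsLongestCycleList (G : SimpleGraph V) (l : List V) : Prop where
  isCycleList : G.IsCycleList l
  length_le : ∀ l', G.IsCycleList l' → l'.length ≤ l.length

theorem exists_isLongestCycleList [Fintype V] {l₀ : List V} (h₀ : G.IsCycleList l₀) :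
    ∃ l, G.IsLongestCycleList l := by
  classical
  let P n := ∃ l, G.IsCycleList l ∧ l.length = n
  obtain ⟨l, hl, hlen⟩ := Nat.findGreatest_spec (P := P) h₀.length_le_card ⟨l₀, h₀, rfl⟩
  exact ⟨l, hl, fun l' h' => hlen ▸ Nat.le_findGreatest h'.length_le_card ⟨l', h', rfl⟩⟩

namespace IsLongestCycleList
variable [DecidableEq V] {l : List V} {w x z : V}

theorem not_isChain_formPerm (hl : G.IsLongestCycleList l) (hw : w ∈ l) {m : List V}
    (hm : m ≠ []) (hnd : m.Nodup) (hdisj : ∀ v ∈ m, v ∉ l) :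
    ¬ List.IsChain G.Adj (w :: (m ++ [l.formPerm w])) := by
  intro hpath
  obtain ⟨s, hs, hr, hσ⟩ := hl.isCycleList.exists_isRotated_formPerm hw
  have hc := hl.isCycleList.of_isRotated hr
  have hnd' : (s ++ [w] ++ m).Nodup := List.nodup_append.2 ⟨hc.nodup, hnd,
    fun a ha b hb hab => hdisj b hb (hab ▸ hr.mem_iff.2 ha)⟩
  have hle := hl.length_le _ (hc.append hs hnd' (hσ ▸ hpath))
  have := List.length_pos_iff.2 hm
  simp only [List.length_append, ← hr.perm.length_eq] at hle
  omega

theorem not_adj_formPerm (hl : G.IsLongestCycleList l) (hx : x ∉ l) (hw : w ∈ l)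
    (hxw : G.Adj x w) : ¬ G.Adj x (l.formPerm w) := fun h =>
  hl.not_isChain_formPerm hw (m := [x]) (by simp) (by simp) (by simpa) (by simp [hxw.symm, h])

theorem mem_of_adj_formPerm_of_adj (hl : G.IsLongestCycleList l) (hx : x ∉ l) (hw : w ∈ l)
    (hxw : G.Adj x w) (hz : G.Adj (l.formPerm w) z) (hzx : G.Adj z x) : z ∈ l := by
  by_contra hzl
  exact hl.not_isChain_formPerm hw (m := [x, z]) (by simp) (by simp [hzx.ne.symm])
    (by simp [hx, hzl]) (by simp [hxw.symm, hzx.symm, hz.symm])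

theorem not_adj_formPerm_formPerm (hl : G.IsLongestCycleList l) (hx : x ∉ l) (hw : w ∈ l)
    (hz : z ∈ l) (hwz : w ≠ z) (hxw : G.Adj x w) (hxz : G.Adj x z) :
    ¬ G.Adj (l.formPerm w) (l.formPerm z) := by
  intro hchord
  obtain ⟨A, B, hA, hB, hr, hAw, hBz⟩ := List.exists_isRotated_append_of_ne hw hz hwz
  have hnd : (A ++ B).Nodup := hr.nodup_iff.1 hl.isCycleList.nodup
  have hσw : l.formPerm w = B.head hB := by
    rw [List.formPerm_eq_of_isRotated hl.isCycleList.nodup hr, ← hAw,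
      List.formPerm_append_apply_getLast hnd]
  have hσz : l.formPerm z = A.head hA := by
    rw [List.formPerm_eq_of_isRotated hl.isCycleList.nodup (hr.trans List.isRotated_append),
      ← hBz, List.formPerm_append_apply_getLast (List.isRotated_append.nodup_iff.1 hnd)]
  have hnew := (hl.isCycleList.of_isRotated hr).cons_reverse_append hA hB
    (hσz ▸ hσw ▸ hchord.symm) (hAw ▸ hxw) (hBz ▸ hxz) (fun h => hx (hr.mem_iff.2 h))
  have := hl.length_le _ hnew
  simp [hr.perm.length_eq] at this

end IsLongestCycleList

theorem Connected.exists_adj_adj_ne [Fintype V] (hconn : G.Connected)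
    (h3 : 3 ≤ Fintype.card V) : ∃ u m v, G.Adj u m ∧ G.Adj m v ∧ u ≠ v := by
  obtain ⟨a, b, c, hab, hac, hbc⟩ := Fintype.two_lt_card_iff.1 h3
  obtain ⟨d, -, ha, hb⟩ := (hconn.preconnected a b).some.exists_boundary_dart {a} rfl hab.symm
  rw [Set.mem_singleton_iff] at ha hb
  obtain ⟨c', hc'a, hc'd⟩ : ∃ c', c' ≠ a ∧ c' ≠ d.snd := by
    by_cases h : b = d.snd
    · exact ⟨c, hac.symm, h ▸ hbc.symm⟩
    · exact ⟨b, hab.symm, h⟩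
  obtain ⟨e, -, he, he'⟩ := (hconn.preconnected a c').some.exists_boundary_dart {a, d.snd}
    (by simp) (by simp [hc'a, hc'd])
  simp only [Set.mem_insert_iff, Set.mem_singleton_iff, not_or] at he he'
  rcases he with he | he
  · exact ⟨d.snd, a, e.snd, ha ▸ d.adj.symm, he ▸ e.adj, fun h => he'.2 h.symm⟩
  · exact ⟨a, d.snd, e.snd, ha ▸ d.adj, he ▸ e.adj, fun h => he'.1 h.symm⟩

/-- For an induced path `u x v` this is `|N(u) ∪ N(v) ∪ N(x)| ≤ d(u) + d(v)`, rewritten by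
inclusion–exclusion. -/
def NeighborhoodUnionCondition [Fintype V] [DecidableEq V] (G : SimpleGraph V)
    [DecidableRel G.Adj] : Prop :=
  ∀ ⦃u x v⦄, G.Adj u x → G.Adj x v → u ≠ v → ¬ G.Adj u v →
    #(G.neighborFinset x \ (G.neighborFinset u ∪ G.neighborFinset v)) ≤
      #(G.neighborFinset u ∩ G.neighborFinset v)

section NeighborhoodUnion
variable [Fintype V] [DecidableEq V] [DecidableRel G.Adj]

namespace IsLongestCycleList
variable {l : List V} {w x : V}

theorem inter_neighborFinset_subset (hl : G.IsLongestCycleList l) (hx : x ∉ l) (hw : w ∈ l)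
    (hxw : G.Adj x w) :
    G.neighborFinset (l.formPerm w) ∩ G.neighborFinset x ⊆ insert w
      ({z ∈ l.toFinset | G.Adj x z}.bipartiteBelow
        (fun a b => a ≠ b ∧ G.Adj a (l.formPerm b)) w) := by
  intro z hz
  rw [Finset.mem_inter, mem_neighborFinset, mem_neighborFinset] at hz
  rcases eq_or_ne z w with rfl | hzw
  · exact Finset.mem_insert_self _ _
  · have hzl := hl.mem_of_adj_formPerm_of_adj hx hw hxw hz.1 hz.2.symm
    simp [Finset.bipartiteBelow, hzl, hz.2, hzw, hz.1.symm]

theorem subset_neighborFinset_sdiff (hl : G.IsLongestCycleList l) (hx : x ∉ l) (hw : w ∈ l)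
    (hxw : G.Adj x w) :
    insert (l.formPerm w) (insert x (({z ∈ l.toFinset | G.Adj x z}.bipartiteAbove
      (fun a b => a ≠ b ∧ G.Adj a (l.formPerm b)) w).image l.formPerm)) ⊆
      G.neighborFinset w \ (G.neighborFinset (l.formPerm w) ∪ G.neighborFinset x) := by
  have hσx := hl.not_adj_formPerm hx hw hxw
  intro v hv
  simp only [Finset.mem_insert, Finset.mem_image, Finset.bipartiteAbove, Finset.mem_filter,
    List.mem_toFinset] at hv
  simp only [Finset.mem_sdiff, Finset.mem_union, mem_neighborFinset]
  rcases hv with rfl | rfl | ⟨z, ⟨⟨hz, hxz⟩, hwz, hadj⟩, rfl⟩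
  · exact ⟨hl.isCycleList.adj_formPerm hw, by simpa [G.adj_comm] using hσx⟩
  · exact ⟨hxw.symm, by simpa [G.adj_comm] using hσx⟩
  · exact ⟨hadj, by simpa [G.adj_comm] using
      ⟨hl.not_adj_formPerm_formPerm hx hw hz hwz hxw hxz, hl.not_adj_formPerm hx hz hxz⟩⟩

theorem card_bipartiteAbove_lt_card_bipartiteBelow (hl : G.IsLongestCycleList l)
    (hG : G.NeighborhoodUnionCondition) (hx : x ∉ l) (hw : w ∈ l) (hxw : G.Adj x w) :
    #({z ∈ l.toFinset | G.Adj x z}.bipartiteAbove (fun a b => a ≠ b ∧ G.Adj a (l.formPerm b)) w) <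
      #({z ∈ l.toFinset | G.Adj x z}.bipartiteBelow
        (fun a b => a ≠ b ∧ G.Adj a (l.formPerm b)) w) := by
  set above := {z ∈ l.toFinset | G.Adj x z}.bipartiteAbove
    (fun a b => a ≠ b ∧ G.Adj a (l.formPerm b)) w
  have hσw : l.formPerm w ∈ l := List.formPerm_apply_mem_of_mem hw
  have habove : ∀ z ∈ above, z ∈ l ∧ w ≠ z := fun z hz => by
    simp only [above, Finset.bipartiteAbove, Finset.mem_filter, List.mem_toFinset] at hz
    exact ⟨hz.1.1, hz.2.1⟩
  have hcard : #(insert (l.formPerm w) (insert x (above.image l.formPerm))) = #above + 2 := by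
    rw [Finset.card_insert_of_notMem, Finset.card_insert_of_notMem,
      Finset.card_image_of_injective _ (Equiv.injective _)]
    · intro h
      obtain ⟨z, hz, hzx⟩ := Finset.mem_image.1 h
      exact hx (hzx ▸ List.formPerm_apply_mem_of_mem (habove z hz).1)
    · simp only [Finset.mem_insert, Finset.mem_image, not_or, not_exists, not_and]
      exact ⟨fun h => hx (h ▸ hσw), fun z hz h => (habove z hz).2 (l.formPerm.injective h).symm⟩
  have := calc #above + 2
      = #(insert (l.formPerm w) (insert x (above.image l.formPerm))) := hcard.symm
    _ ≤ #(G.neighborFinset w \ (G.neighborFinset (l.formPerm w) ∪ G.neighborFinset x)) :=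
      Finset.card_le_card (hl.subset_neighborFinset_sdiff hx hw hxw)
    _ ≤ #(G.neighborFinset (l.formPerm w) ∩ G.neighborFinset x) :=
      hG (hl.isCycleList.adj_formPerm hw).symm hxw.symm (fun h => hx (h ▸ hσw))
        (fun h => hl.not_adj_formPerm hx hw hxw h.symm)
    _ ≤ _ := Finset.card_le_card (hl.inter_neighborFinset_subset hx hw hxw)
    _ ≤ _ := Finset.card_insert_le _ _
  omega

theorem mem (hl : G.IsLongestCycleList l) (hconn : G.Connected)
    (hG : G.NeighborhoodUnionCondition) (v : V) : v ∈ l := by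
  by_contra hv
  obtain ⟨u, hu⟩ := List.exists_mem_of_length_pos (l := l)
    (by have := hl.isCycleList.three_le_length; omega)
  obtain ⟨d, -, hy, hx⟩ := (hconn.preconnected u v).some.exists_boundary_dart {u | u ∈ l} hu hv
  have hW := Finset.eq_empty_of_forall_card_bipartiteAbove_lt
    (s := {z ∈ l.toFinset | G.Adj d.snd z}) (r := fun a b => a ≠ b ∧ G.Adj a (l.formPerm b))
    fun w hw => by
      rw [Finset.mem_filter, List.mem_toFinset] at hw
      exact hl.card_bipartiteAbove_lt_card_bipartiteBelow hG hx hw.1 hw.2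
  have : d.fst ∈ ({z ∈ l.toFinset | G.Adj d.snd z} : Finset V) := by
    simpa [d.adj.symm] using hy
  simp [hW] at this

theorem length_eq_card (hl : G.IsLongestCycleList l) (hconn : G.Connected)
    (hG : G.NeighborhoodUnionCondition) : l.length = Fintype.card V := by
  rw [← List.toFinset_card_of_nodup hl.isCycleList.nodup,
    Finset.eq_univ_of_forall fun v => List.mem_toFinset.2 (hl.mem hconn hG v), Finset.card_univ]

end IsLongestCycleList

theorem exists_isCycleList (hconn : G.Connected) (h3 : 3 ≤ Fintype.card V)
    (hG : G.NeighborhoodUnionCondition) : ∃ l, G.IsCycleList l := by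
  obtain ⟨u, m, v, hum, hmv, huv⟩ := hconn.exists_adj_adj_ne h3
  by_cases huv_adj : G.Adj u v
  · exact ⟨[u, m, v], by simp, by simp [hum.ne, hmv.ne, huv],
      by simp [Cycle.chain_coe_cons, hum, hmv, huv_adj.symm]⟩
  have hvu : ¬ G.Adj v u := fun h => huv_adj h.symm
  have hsub : ({u, v} : Finset V) ⊆
      G.neighborFinset m \ (G.neighborFinset u ∪ G.neighborFinset v) := by
    intro z hz
    simp only [Finset.mem_insert, Finset.mem_singleton] at hz
    rcases hz with rfl | rfl <;> simp [hum.symm, hmv, huv_adj, hvu]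
  have h2 := (Finset.card_le_card hsub).trans (hG hum hmv huv huv_adj)
  rw [Finset.card_pair huv] at h2
  obtain ⟨m', hm', hm'm⟩ := Finset.exists_mem_ne h2 m
  rw [Finset.mem_inter, mem_neighborFinset, mem_neighborFinset] at hm'
  exact ⟨[u, m, v, m'], by simp, by simp [hum.ne, hmv.ne, huv, hm'.1.ne, hm'.2.ne, hm'm.symm],
    by simp [Cycle.chain_coe_cons, hum, hmv, hm'.1.symm, hm'.2]⟩

end NeighborhoodUnion

end SimpleGraph

/-- Let `G` be a connected finite graph on at least three vertices such that
`d(u) + d(v) ≥ |N(u) ∪ N(v) ∪ N(x)|` for every path `uxv` with `uv ∉ E(G)`.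
Then `G` is Hamiltonian. -/
theorem stmt_16 {V : Type*} [Fintype V] [DecidableEq V] (G : SimpleGraph V)
    (h3 : 3 ≤ Fintype.card V) (hconn : G.Connected)
    (hdeg : ∀ u x v : V, G.Adj u x → G.Adj x v → u ≠ v → ¬ G.Adj u v →
      (G.neighborSet u ∪ G.neighborSet v ∪ G.neighborSet x).ncard ≤ deg G u + deg G v) :
    G.IsHamiltonian := by
  classical
  have hG : G.NeighborhoodUnionCondition := fun u x v hux hxv huv hadj => by
    have h := hdeg u x v hux hxv huv hadj
    simp only [deg, ← coe_neighborFinset, ← Finset.coe_union, Set.ncard_coe_finset] at h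
    exact Finset.card_sdiff_le_card_inter_of_card_union_le h
  obtain ⟨l₀, h₀⟩ := exists_isCycleList hconn h3 hG
  obtain ⟨l, hl⟩ := exists_isLongestCycleList h₀
  exact hl.isCycleList.isHamiltonian (hl.length_eq_card hconn hG)
end
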